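/- arXiv:1902.08011 — 7 statements merged into one kernel-verified Lean document; each statement's English description precedes it below -/
import Mathlib

section
/- Let gcd(P²,u) = R (monic gcd). Then R is the square of a monic polynomial Q, and moreover Q = gcd(P,u,v) (monic gcd). In other words, gcd(P²,u) = (gcd(P,u,v))². -/
/-!
Put `Q = gcd(P, u, v)` and `R = gcd(P², u)`. Since `Q` divides `P` and `v`, `Q²` divides
`h - v² = u w`; as `gcd(u, v, w) = 1` makes `Q` coprime to `w`, `Q²` divides `u`, hence `R`.
Conversely `R` divides `P²` and `u`, hence `v² = h - u w`, so `R` divides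
`gcd(P², u², v²) = gcd(P, u, v)² = Q²`. Both are monic, so `R = Q²`.
-/

section StrongNormalizedGCDMonoid

variable {α : Type*} [CommMonoidWithZero α] [StrongNormalizedGCDMonoid α]

theorem normalize_pow (x : α) (k : ℕ) : normalize (x ^ k) = normalize x ^ k := by
  rw [← coe_normalizeHom, map_pow]

theorem gcd_pow_pow (a b : α) (k : ℕ) : gcd (a ^ k) (b ^ k) = gcd a b ^ k := by
  obtain ⟨a', b', ha, hb, hab⟩ := extract_gcd a b
  have hab_pow : gcd (a' ^ k) (b' ^ k) = 1 := by
    rw [← normalize_gcd, normalize_eq_one, gcd_isUnit_iff_isRelPrime]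
    exact (gcd_isUnit_iff_isRelPrime.mp hab).pow
  calc gcd (a ^ k) (b ^ k)
      = gcd ((gcd a b * a') ^ k) ((gcd a b * b') ^ k) := by rw [← ha, ← hb]
    _ = gcd a b ^ k := by
      rw [mul_pow, mul_pow, gcd_mul_left, hab_pow, mul_one, normalize_pow, normalize_gcd]

end StrongNormalizedGCDMonoid

section SquareGCD

variable {α : Type*} [CommRing α] {p u v w : α}

theorem sq_gcd_gcd_dvd_gcd_sq [NormalizedGCDMonoid α] (hcop : IsUnit (gcd u (gcd v w)))
    (hdvd : p ^ 2 ∣ v ^ 2 + u * w) :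
    gcd p (gcd u v) ^ 2 ∣ gcd (p ^ 2) u := by
  set q := gcd p (gcd u v)
  have hqp : q ∣ p := gcd_dvd_left _ _
  have hqv : q ∣ v := (gcd_dvd_right _ _).trans (gcd_dvd_right _ _)
  have hqw : IsRelPrime q w := by
    refine gcd_isUnit_iff_isRelPrime.mp (isUnit_of_dvd_unit ?_ hcop)
    rw [← gcd_assoc]
    exact gcd_dvd_gcd (gcd_dvd_right _ _) dvd_rfl
  have hq2uw : q ^ 2 ∣ u * w :=
    (dvd_add_right (pow_dvd_pow_of_dvd hqv 2)).mp ((pow_dvd_pow_of_dvd hqp 2).trans hdvd)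
  exact dvd_gcd (pow_dvd_pow_of_dvd hqp 2) (hqw.pow_left.dvd_of_dvd_mul_right hq2uw)

theorem gcd_sq_dvd_sq_gcd_gcd [StrongNormalizedGCDMonoid α] (hdvd : p ^ 2 ∣ v ^ 2 + u * w) :
    gcd (p ^ 2) u ∣ gcd p (gcd u v) ^ 2 := by
  set r := gcd (p ^ 2) u
  have hrp : r ∣ p ^ 2 := gcd_dvd_left _ _
  have hru : r ∣ u := gcd_dvd_right _ _
  have hrv : r ∣ v ^ 2 := (dvd_add_left (hru.mul_right w)).mp (hrp.trans hdvd)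
  have hru2 : r ∣ u ^ 2 := hru.trans (dvd_pow_self u two_ne_zero)
  rw [← gcd_assoc, ← gcd_pow_pow, ← gcd_pow_pow]
  exact dvd_gcd (dvd_gcd hrp hru2) hrv

theorem gcd_sq_eq_sq_gcd_gcd [StrongNormalizedGCDMonoid α] (hcop : IsUnit (gcd u (gcd v w)))
    (hdvd : p ^ 2 ∣ v ^ 2 + u * w) :
    gcd (p ^ 2) u = gcd p (gcd u v) ^ 2 :=
  dvd_antisymm_of_normalize_eq (normalize_gcd _ _) (by rw [normalize_pow, normalize_gcd])
    (gcd_sq_dvd_sq_gcd_gcd hdvd) (sq_gcd_gcd_dvd_gcd_sq hcop hdvd)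

end SquareGCD

theorem stmt_0_general
    (h P u v w : Polynomial ℂ)
    (hPdvd : P ^ 2 ∣ h)
    (humon : u.Monic)
    (heq : v ^ 2 + u * w = h)
    (hcop : gcd u (gcd v w) = 1) :
    ∃ Q : Polynomial ℂ, Q.Monic ∧ gcd (P ^ 2) u = Q ^ 2 ∧ Q = gcd P (gcd u v) := by
  have hQ0 : gcd P (gcd u v) ≠ 0 := fun h0 =>
    humon.ne_zero ((gcd_eq_zero_iff _ _).mp ((gcd_eq_zero_iff _ _).mp h0).2).1
  refine ⟨gcd P (gcd u v), ?_, gcd_sq_eq_sq_gcd_gcd (hcop ▸ isUnit_one) (heq ▸ hPdvd), rfl⟩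
  simpa only [normalize_gcd] using Polynomial.monic_normalize hQ0

/-- Lemma (Deg), first part: for a point `[[v,u],[w,-v]]` of the maximal stratum
`M_{g,g}(h)` with `h = P² h'` (`P` the maximal quadratic divisor of `h`), the monic
gcd `R = gcd(P², u)` is the square of a monic polynomial `Q`, and `Q = gcd(P, u, v)`. -/
theorem stmt_0
    (g : ℕ) (hg : 1 ≤ g) (h h' P u v w : Polynomial ℂ)
    (hhmon : h.Monic) (hhdeg : h.natDegree = 2 * g + 1)
    (hPmon : P.Monic) (hPdvd : P ^ 2 ∣ h)
    (hPmax : ∀ S : Polynomial ℂ, S.Monic → S ^ 2 ∣ h → S.natDegree ≤ P.natDegree)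
    (hh' : h = P ^ 2 * h')
    (humon : u.Monic) (hudeg : u.natDegree = g)
    (hwmon : w.Monic) (hwdeg : w.natDegree = g + 1)
    (hvdeg : v.degree ≤ ((g - 1 : ℕ) : WithBot ℕ))
    (heq : v ^ 2 + u * w = h)
    (hcop : gcd u (gcd v w) = 1) :
    ∃ Q : Polynomial ℂ, Q.Monic ∧ gcd (P ^ 2) u = Q ^ 2 ∧ Q = gcd P (gcd u v) :=
  stmt_0_general h P u v w hPdvd humon heq hcop
end

section
/- Conversely, if Q = gcd(P,u,v) (monic gcd), then gcd(P²,u) = Q². -/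
/-!
If `Q = gcd(P, u, v)`, then `Q` is coprime to `w` (as `gcd(u, v, w) = 1`) and `Q²` divides
`u w = P² h' - v²`, so `Q² ∣ gcd(P², u)`. Conversely `D = gcd(P², u)` divides
`v² = P² h' - u w`, hence divides `gcd(u², v²) ∣ gcd(u, v)²` and then
`gcd(P², gcd(u, v)²) ∣ Q²`. Both sides are normalized, so they are equal.
-/

theorem dvd_gcd_pow_of_dvd_pow {α : Type*} [CommMonoidWithZero α] [GCDMonoid α] {d a b : α}
    {k : ℕ} (ha : d ∣ a ^ k) (hb : d ∣ b ^ k) : d ∣ gcd a b ^ k := by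
  obtain ⟨a', b', ha', hb', hrel⟩ := extract_gcd a b
  have hcop : IsUnit (gcd (a' ^ k) (b' ^ k)) :=
    gcd_isUnit_iff_isRelPrime.mpr (gcd_isUnit_iff_isRelPrime.mp hrel).pow
  have hd : d ∣ gcd (gcd a b ^ k * a' ^ k) (gcd a b ^ k * b' ^ k) := by
    rw [← mul_pow, ← mul_pow, ← ha', ← hb']
    exact dvd_gcd ha hb
  exact (hd.trans (gcd_mul_left' _ _ _).dvd).trans (hcop.mul_right_dvd.mpr dvd_rfl)

section

variable {R : Type*} [CommRing R] [StrongNormalizedGCDMonoid R] {P u v w k : R}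

theorem sq_gcd_dvd_gcd_of_sq_add_mul_eq (heq : v ^ 2 + u * w = P ^ 2 * k)
    (hcop : gcd u (gcd v w) = 1) : gcd P (gcd u v) ^ 2 ∣ gcd (P ^ 2) u := by
  set Q := gcd P (gcd u v)
  have hQP : Q ∣ P := gcd_dvd_left _ _
  have hQu : Q ∣ u := (gcd_dvd_right _ _).trans (gcd_dvd_left _ _)
  have hQv : Q ∣ v := (gcd_dvd_right _ _).trans (gcd_dvd_right _ _)
  have hQw : IsRelPrime Q w := fun d hdQ hdw ↦
    isUnit_of_dvd_one <| hcop ▸ dvd_gcd (hdQ.trans hQu) (dvd_gcd (hdQ.trans hQv) hdw)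
  have hQuw : Q ^ 2 ∣ u * w := by
    rw [show u * w = P ^ 2 * k - v ^ 2 by rw [← heq]; ring]
    exact dvd_sub ((pow_dvd_pow_of_dvd hQP 2).mul_right _) (pow_dvd_pow_of_dvd hQv 2)
  exact dvd_gcd (pow_dvd_pow_of_dvd hQP 2) (hQw.pow_left.dvd_of_dvd_mul_right hQuw)

theorem gcd_dvd_sq_gcd_of_sq_add_mul_eq (heq : v ^ 2 + u * w = P ^ 2 * k) :
    gcd (P ^ 2) u ∣ gcd P (gcd u v) ^ 2 := by
  set D := gcd (P ^ 2) u
  have hDP : D ∣ P ^ 2 := gcd_dvd_left _ _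
  have hDu : D ∣ u ^ 2 := (gcd_dvd_right _ _).trans (dvd_pow_self u two_ne_zero)
  have hDv : D ∣ v ^ 2 := by
    rw [show v ^ 2 = P ^ 2 * k - u * w by rw [← heq]; ring]
    exact dvd_sub (hDP.mul_right _) ((gcd_dvd_right _ _).mul_right _)
  exact dvd_gcd_pow_of_dvd_pow hDP (dvd_gcd_pow_of_dvd_pow hDu hDv)

theorem gcd_sq_eq_sq_gcd_of_sq_add_mul_eq (heq : v ^ 2 + u * w = P ^ 2 * k)
    (hcop : gcd u (gcd v w) = 1) : gcd (P ^ 2) u = gcd P (gcd u v) ^ 2 := by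
  have h := normalize_eq_normalize (gcd_dvd_sq_gcd_of_sq_add_mul_eq heq)
    (sq_gcd_dvd_gcd_of_sq_add_mul_eq heq hcop)
  simpa only [sq, normalize_mul, normalize_gcd] using h

end

theorem stmt_1_general
    (h h' P u v w : Polynomial ℂ)
    (hh' : h = P ^ 2 * h')
    (heq : v ^ 2 + u * w = h)
    (hcop : gcd u (gcd v w) = 1)
    (Q : Polynomial ℂ) (hQ : Q = gcd P (gcd u v)) :
    gcd (P ^ 2) u = Q ^ 2 := by
  subst hQ
  exact gcd_sq_eq_sq_gcd_of_sq_add_mul_eq (heq.trans hh') hcop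

/-- Lemma (Deg), converse of the first part: if `Q = gcd(P, u, v)` (monic gcd),
then `gcd(P², u) = Q²`. -/
theorem stmt_1
    (g : ℕ) (hg : 1 ≤ g) (h h' P u v w : Polynomial ℂ)
    (hhmon : h.Monic) (hhdeg : h.natDegree = 2 * g + 1)
    (hPmon : P.Monic) (hPdvd : P ^ 2 ∣ h)
    (hPmax : ∀ S : Polynomial ℂ, S.Monic → S ^ 2 ∣ h → S.natDegree ≤ P.natDegree)
    (hh' : h = P ^ 2 * h')
    (humon : u.Monic) (hudeg : u.natDegree = g)
    (hwmon : w.Monic) (hwdeg : w.natDegree = g + 1)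
    (hvdeg : v.degree ≤ ((g - 1 : ℕ) : WithBot ℕ))
    (heq : v ^ 2 + u * w = h)
    (hcop : gcd u (gcd v w) = 1)
    (Q : Polynomial ℂ) (hQ : Q = gcd P (gcd u v)) :
    gcd (P ^ 2) u = Q ^ 2 :=
  stmt_1_general h h' P u v w hh' heq hcop Q hQ
end

section
/- Let gcd(P²,w) = R (monic gcd). Then R is the square of a monic polynomial Q, and moreover Q = gcd(P,v,w) (monic gcd). In other words, gcd(P²,w) = (gcd(P,v,w))². -/
/-!
If `Q = gcd(P, v, w)`, then `Q² ∣ v²` and `Q² ∣ P² h' = v² + u w`, so `Q² ∣ u w`; since `u, v, w`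
have no common factor, `Q` is coprime to `u` and `Q² ∣ w`. Conversely `gcd(P², w)` divides
`P² h' - u w = v²` and `w²`, hence `gcd(P², v², w²)`, which divides `gcd(P, v, w)²`. The two
monic polynomials `gcd(P², w)` and `Q²` are thus associated, hence equal.
-/

open Polynomial

theorem gcd_pow_dvd_pow_gcd {α : Type*} [CommMonoidWithZero α] [GCDMonoid α]
    (a b : α) (k : ℕ) : gcd (a ^ k) (b ^ k) ∣ gcd a b ^ k := by
  obtain ⟨a', b', ha, hb, hunit⟩ := extract_gcd a b
  have hcop : IsUnit (gcd (a' ^ k) (b' ^ k)) :=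
    gcd_isUnit_iff_isRelPrime.2 (gcd_isUnit_iff_isRelPrime.1 hunit).pow
  calc gcd (a ^ k) (b ^ k) = gcd (gcd a b ^ k * a' ^ k) (gcd a b ^ k * b' ^ k) := by
        rw [← mul_pow, ← mul_pow, ← ha, ← hb]
    _ ∣ gcd a b ^ k * gcd (a' ^ k) (b' ^ k) := (gcd_mul_left' _ _ _).dvd
    _ ∣ gcd a b ^ k := (associated_mul_unit_left _ _ hcop).dvd

theorem associated_gcd_sq_sq_gcd_of_sq_add_mul_eq {R : Type*} [CommRing R] [GCDMonoid R]
    {P c u v w : R} (heq : v ^ 2 + u * w = P ^ 2 * c) (hcop : IsRelPrime u (gcd v w)) :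
    Associated (gcd (P ^ 2) w) (gcd P (gcd v w) ^ 2) := by
  set Q := gcd P (gcd v w)
  have hQP : Q ∣ P := gcd_dvd_left _ _
  have hQvw : Q ∣ gcd v w := gcd_dvd_right _ _
  have hQw : Q ^ 2 ∣ w := by
    have hQuw : Q ^ 2 ∣ u * w := by
      rw [show u * w = P ^ 2 * c - v ^ 2 by rw [← heq]; ring]
      exact dvd_sub ((pow_dvd_pow_of_dvd hQP 2).mul_right _)
        (pow_dvd_pow_of_dvd (hQvw.trans (gcd_dvd_left _ _)) 2)
    exact (hcop.symm.of_dvd_left hQvw).pow_left.dvd_of_dvd_mul_left hQuw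
  have hRv : gcd (P ^ 2) w ∣ v ^ 2 := by
    rw [show v ^ 2 = P ^ 2 * c - u * w by rw [← heq]; ring]
    exact dvd_sub ((gcd_dvd_left _ _).mul_right _) ((gcd_dvd_right _ _).mul_left _)
  have hRw : gcd (P ^ 2) w ∣ w ^ 2 := (gcd_dvd_right _ _).trans (dvd_pow_self w two_ne_zero)
  have hRQ : gcd (P ^ 2) w ∣ Q ^ 2 :=
    calc gcd (P ^ 2) w ∣ gcd (P ^ 2) (gcd (v ^ 2) (w ^ 2)) :=
          dvd_gcd (gcd_dvd_left _ _) (dvd_gcd hRv hRw)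
      _ ∣ gcd (P ^ 2) (gcd v w ^ 2) := gcd_dvd_gcd dvd_rfl (gcd_pow_dvd_pow_gcd v w 2)
      _ ∣ Q ^ 2 := gcd_pow_dvd_pow_gcd P (gcd v w) 2
  exact associated_of_dvd_dvd hRQ (dvd_gcd (pow_dvd_pow_of_dvd hQP 2) hQw)

theorem Polynomial.monic_gcd_of_left_ne_zero {K : Type*} [Field K] [DecidableEq K] {p : K[X]}
    (hp : p ≠ 0) (q : K[X]) : (gcd p q).Monic :=
  (normalize_eq_self_iff_monic fun h0 => hp ((gcd_eq_zero_iff _ _).1 h0).1).1 (normalize_gcd _ _)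

theorem stmt_2_general
    (h h' P u v w : Polynomial ℂ)
    (hPmon : P.Monic)
    (hh' : h = P ^ 2 * h')
    (heq : v ^ 2 + u * w = h)
    (hcop : gcd u (gcd v w) = 1) :
    ∃ Q : Polynomial ℂ, Q.Monic ∧ gcd (P ^ 2) w = Q ^ 2 ∧ Q = gcd P (gcd v w) := by
  have hQmon : (gcd P (gcd v w)).Monic := monic_gcd_of_left_ne_zero hPmon.ne_zero _
  have hRmon : (gcd (P ^ 2) w).Monic := monic_gcd_of_left_ne_zero (pow_ne_zero 2 hPmon.ne_zero) _
  have hcop' : IsRelPrime u (gcd v w) := gcd_isUnit_iff_isRelPrime.1 (hcop ▸ isUnit_one)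
  refine ⟨gcd P (gcd v w), hQmon, eq_of_monic_of_associated hRmon (hQmon.pow 2) ?_, rfl⟩
  exact associated_gcd_sq_sq_gcd_of_sq_add_mul_eq (heq.trans hh') hcop'

/-- Lemma (Deg), second part: the monic gcd `R = gcd(P², w)` is the square of a monic
polynomial `Q`, and `Q = gcd(P, v, w)`. -/
theorem stmt_2
    (g : ℕ) (hg : 1 ≤ g) (h h' P u v w : Polynomial ℂ)
    (hhmon : h.Monic) (hhdeg : h.natDegree = 2 * g + 1)
    (hPmon : P.Monic) (hPdvd : P ^ 2 ∣ h)
    (hPmax : ∀ S : Polynomial ℂ, S.Monic → S ^ 2 ∣ h → S.natDegree ≤ P.natDegree)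
    (hh' : h = P ^ 2 * h')
    (humon : u.Monic) (hudeg : u.natDegree = g)
    (hwmon : w.Monic) (hwdeg : w.natDegree = g + 1)
    (hvdeg : v.degree ≤ ((g - 1 : ℕ) : WithBot ℕ))
    (heq : v ^ 2 + u * w = h)
    (hcop : gcd u (gcd v w) = 1) :
    ∃ Q : Polynomial ℂ, Q.Monic ∧ gcd (P ^ 2) w = Q ^ 2 ∧ Q = gcd P (gcd v w) :=
  stmt_2_general h h' P u v w hPmon hh' heq hcop
end

section
/- Every root a ∈ ℂ of the polynomial gcd(P²,u) (monic gcd) has even multiplicity in gcd(P²,u); equivalently, there exists a monic polynomial Q ∈ ℂ[X] with gcd(P²,u) = Q². -/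
/-!
Fix a root `a` of `gcd(P², u)` and compare orders at `a`. If `ord_a u ≥ 2 ord_a P`, the gcd has
order `2 ord_a P`. Otherwise `ord_a u < ord_a (P²) ≤ ord_a h`; as `a` is a root of `u` and `h`, it is
a root of `v`, hence not of `w` by coprimality, and then `u w = h - v²` forces
`ord_a u = 2 ord_a v`. Over `ℂ` a monic polynomial all of whose multiplicities are even is a square.
-/

open Polynomial

section Field

variable {K : Type*} [Field K] [DecidableEq K]

theorem rootMultiplicity_gcd {p q : K[X]} (hp : p ≠ 0) (hq : q ≠ 0) (a : K) :
    rootMultiplicity a (gcd p q) = min (rootMultiplicity a p) (rootMultiplicity a q) := by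
  have hpq : gcd p q ≠ 0 := fun h => hp ((gcd_eq_zero_iff p q).1 h).1
  refine le_antisymm (le_min (rootMultiplicity_le_rootMultiplicity_of_dvd hp (gcd_dvd_left p q) a)
    (rootMultiplicity_le_rootMultiplicity_of_dvd hq (gcd_dvd_right p q) a)) ?_
  rw [le_rootMultiplicity_iff hpq]
  exact dvd_gcd ((pow_dvd_pow _ (min_le_left _ _)).trans (pow_rootMultiplicity_dvd p a))
    ((pow_dvd_pow _ (min_le_right _ _)).trans (pow_rootMultiplicity_dvd q a))

theorem not_isRoot_of_gcd_gcd_eq_one {u v w : K[X]} {a : K} (hcop : gcd u (gcd v w) = 1)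
    (hu : u.IsRoot a) (hv : v.IsRoot a) : ¬ w.IsRoot a := fun hw =>
  not_isUnit_X_sub_C a <| isUnit_of_dvd_one <| hcop ▸
    dvd_gcd (dvd_iff_isRoot.2 hu) (dvd_gcd (dvd_iff_isRoot.2 hv) (dvd_iff_isRoot.2 hw))

end Field

section Domain

variable {R : Type*} [CommRing R] [IsDomain R]

theorem isRoot_of_sq_add_mul_eq {u v w h : R[X]} {a : R} (hsum : v ^ 2 + u * w = h)
    (hu : u.IsRoot a) (hh : h.IsRoot a) : v.IsRoot a := by
  have hv2 : eval a v ^ 2 = 0 := by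
    simpa [hu.eq_zero, hh.eq_zero] using congrArg (eval a) hsum
  exact pow_eq_zero_iff two_ne_zero |>.1 hv2

theorem even_rootMultiplicity_sq (p : R[X]) (a : R) : Even (rootMultiplicity a (p ^ 2)) := by
  rcases eq_or_ne p 0 with rfl | hp
  · simp
  · exact ⟨_, by rw [sq, rootMultiplicity_mul (mul_ne_zero hp hp)]⟩

/-- The order of `h` at `a` is too large to matter in `u w = h - v²`, so
`ord_a u = ord_a (u w) = ord_a v²`. -/
theorem even_rootMultiplicity_of_sq_add_mul_eq {u v w h : R[X]} {a : R}
    (hsum : v ^ 2 + u * w = h) (hw : ¬ w.IsRoot a)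
    (hh : (X - C a) ^ (rootMultiplicity a u + 1) ∣ h) : Even (rootMultiplicity a u) := by
  rcases eq_or_ne u 0 with rfl | hu
  · simp
  have huw : u * w ≠ 0 := mul_ne_zero hu (fun hw0 => hw (by simp [hw0]))
  have hmul : rootMultiplicity a (u * w) = rootMultiplicity a u := by
    rw [rootMultiplicity_mul huw, rootMultiplicity_eq_zero hw, add_zero]
  rw [← hmul] at hh ⊢
  have hh_pow : (X - C a) ^ rootMultiplicity a (u * w) ∣ h := (pow_dvd_pow _ (Nat.le_succ _)).trans hh
  have huw_ndvd : ¬ (X - C a) ^ (rootMultiplicity a (u * w) + 1) ∣ u * w :=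
    (rootMultiplicity_le_iff huw a _).1 le_rfl
  have hv : v ^ 2 = h - u * w := eq_sub_of_add_eq hsum
  have huw' : u * w = h - v ^ 2 := eq_sub_of_add_eq' hsum
  have hv0 : v ^ 2 ≠ 0 := by
    intro hv0
    rw [hv0, sub_zero] at huw'
    exact huw_ndvd (hh.trans huw'.symm.dvd)
  suffices rootMultiplicity a (u * w) = rootMultiplicity a (v ^ 2) by
    rw [this]; exact even_rootMultiplicity_sq v a
  refine le_antisymm ((le_rootMultiplicity_iff hv0).2 ?_) ((rootMultiplicity_le_iff hv0 a _).2 ?_)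
  · exact (dvd_sub hh_pow (pow_rootMultiplicity_dvd _ a)).trans hv.symm.dvd
  · exact fun hdvd => huw_ndvd ((dvd_sub hh hdvd).trans huw'.symm.dvd)

end Domain

theorem exists_monic_sq_eq_of_even_rootMultiplicity {K : Type*} [Field K] [IsAlgClosed K]
    {d : K[X]} (hd : d.Monic) (he : ∀ a : K, Even (rootMultiplicity a d)) :
    ∃ Q : K[X], Q.Monic ∧ d = Q ^ 2 := by
  classical
  refine ⟨∏ a ∈ d.roots.toFinset, (X - C a) ^ (rootMultiplicity a d / 2),
    monic_prod_of_monic _ _ fun a _ => (monic_X_sub_C a).pow _, ?_⟩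
  rw [← Finset.prod_pow]
  conv_lhs => rw [(IsAlgClosed.splits d).eq_prod_roots_of_monic hd]
  rw [Finset.prod_multiset_map_count]
  refine Finset.prod_congr rfl fun a _ => ?_
  rw [count_roots, ← pow_mul, Nat.div_mul_cancel (he a).two_dvd]

theorem stmt_4_general
    (h P u v w : Polynomial ℂ)
    (hPmon : P.Monic) (hPdvd : P ^ 2 ∣ h)
    (humon : u.Monic)
    (heq : v ^ 2 + u * w = h)
    (hcop : gcd u (gcd v w) = 1) :
    (∀ a : ℂ, (gcd (P ^ 2) u).IsRoot a →
      Even (rootMultiplicity a (gcd (P ^ 2) u))) ∧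
    ∃ Q : Polynomial ℂ, Q.Monic ∧ gcd (P ^ 2) u = Q ^ 2 := by
  have hP2 : P ^ 2 ≠ 0 := pow_ne_zero 2 hPmon.ne_zero
  have heven : ∀ a, Even (rootMultiplicity a (gcd (P ^ 2) u)) := by
    intro a
    rw [rootMultiplicity_gcd hP2 humon.ne_zero]
    rcases le_or_gt (rootMultiplicity a (P ^ 2)) (rootMultiplicity a u) with hle | hlt
    · rw [min_eq_left hle]; exact even_rootMultiplicity_sq P a
    rw [min_eq_right hlt.le]
    by_cases hu : u.IsRoot a
    · have hh : (X - C a) ^ (rootMultiplicity a u + 1) ∣ h :=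
        (pow_dvd_pow _ hlt).trans ((pow_rootMultiplicity_dvd _ a).trans hPdvd)
      have hv : v.IsRoot a := isRoot_of_sq_add_mul_eq heq hu <| dvd_iff_isRoot.1 <|
        (dvd_pow_self _ (Nat.succ_ne_zero _)).trans hh
      exact even_rootMultiplicity_of_sq_add_mul_eq heq (not_isRoot_of_gcd_gcd_eq_one hcop hu hv) hh
    · rw [rootMultiplicity_eq_zero hu]; exact Even.zero
  have hd : gcd (P ^ 2) u ≠ 0 := fun h0 => hP2 ((gcd_eq_zero_iff _ _).1 h0).1
  exact ⟨fun a _ => heven a, exists_monic_sq_eq_of_even_rootMultiplicity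
    (normalize_gcd (P ^ 2) u ▸ monic_normalize hd) heven⟩

/-- Every root of `gcd(P², u)` has even multiplicity; equivalently `gcd(P², u)` is the
square of a monic polynomial. -/
theorem stmt_4
    (g : ℕ) (hg : 1 ≤ g) (h h' P u v w : Polynomial ℂ)
    (hhmon : h.Monic) (hhdeg : h.natDegree = 2 * g + 1)
    (hPmon : P.Monic) (hPdvd : P ^ 2 ∣ h)
    (hPmax : ∀ S : Polynomial ℂ, S.Monic → S ^ 2 ∣ h → S.natDegree ≤ P.natDegree)
    (hh' : h = P ^ 2 * h')
    (humon : u.Monic) (hudeg : u.natDegree = g)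
    (hwmon : w.Monic) (hwdeg : w.natDegree = g + 1)
    (hvdeg : v.degree ≤ ((g - 1 : ℕ) : WithBot ℕ))
    (heq : v ^ 2 + u * w = h)
    (hcop : gcd u (gcd v w) = 1) :
    (∀ a : ℂ, (gcd (P ^ 2) u).IsRoot a →
      Even (rootMultiplicity a (gcd (P ^ 2) u))) ∧
    ∃ Q : Polynomial ℂ, Q.Monic ∧ gcd (P ^ 2) u = Q ^ 2 :=
  stmt_4_general h P u v w hPmon hPdvd humon heq hcop
end

section
/- If Q = gcd(P,u,v) (monic gcd), then Q² divides u. (Indeed, from v² + u·w = P²·h' one gets Q²·(P_Q²·h' − v_Q²) = u·w, where P = Q·P_Q and v = Q·v_Q, and gcd(u,v,w) = 1 then forces Q² ∣ u.) -/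
theorem isRelPrime_of_dvd_of_dvd_of_gcd_eq_one {α : Type*} [CommMonoidWithZero α]
    [GCDMonoid α] {q u v w : α} (hqu : q ∣ u) (hqv : q ∣ v) (hcop : gcd u (gcd v w) = 1) :
    IsRelPrime q w := fun _d hdq hdw ↦
  isUnit_of_dvd_one <| hcop ▸ dvd_gcd (hdq.trans hqu) (dvd_gcd (hdq.trans hqv) hdw)

theorem sq_dvd_of_sq_add_mul_eq_sq_mul {R : Type*} [CommRing R] [DecompositionMonoid R]
    {q p k u v w : R} (hqp : q ∣ p) (hqv : q ∣ v) (hqw : IsRelPrime q w)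
    (heq : v ^ 2 + u * w = p ^ 2 * k) : q ^ 2 ∣ u := by
  have huw : u * w = p ^ 2 * k - v ^ 2 := by linear_combination heq
  have hdvd : q ^ 2 ∣ u * w :=
    huw ▸ dvd_sub ((pow_dvd_pow_of_dvd hqp 2).mul_right k) (pow_dvd_pow_of_dvd hqv 2)
  exact hqw.pow_left.dvd_of_dvd_mul_right hdvd

theorem stmt_6_general
    (h h' P u v w : Polynomial ℂ)
    (hh' : h = P ^ 2 * h')
    (heq : v ^ 2 + u * w = h)
    (hcop : gcd u (gcd v w) = 1)
    (Q : Polynomial ℂ) (hQ : Q = gcd P (gcd u v)) :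
    Q ^ 2 ∣ u := by
  have hQP : Q ∣ P := hQ ▸ gcd_dvd_left _ _
  have hQu : Q ∣ u := hQ ▸ (gcd_dvd_right _ _).trans (gcd_dvd_left _ _)
  have hQv : Q ∣ v := hQ ▸ (gcd_dvd_right _ _).trans (gcd_dvd_right _ _)
  exact sq_dvd_of_sq_add_mul_eq_sq_mul hQP hQv
    (isRelPrime_of_dvd_of_dvd_of_gcd_eq_one hQu hQv hcop) (heq.trans hh')

/-- If `Q = gcd(P, u, v)` (monic gcd), then `Q²` divides `u`. -/
theorem stmt_6
    (g : ℕ) (hg : 1 ≤ g) (h h' P u v w : Polynomial ℂ)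
    (hhmon : h.Monic) (hhdeg : h.natDegree = 2 * g + 1)
    (hPmon : P.Monic) (hPdvd : P ^ 2 ∣ h)
    (hPmax : ∀ S : Polynomial ℂ, S.Monic → S ^ 2 ∣ h → S.natDegree ≤ P.natDegree)
    (hh' : h = P ^ 2 * h')
    (humon : u.Monic) (hudeg : u.natDegree = g)
    (hwmon : w.Monic) (hwdeg : w.natDegree = g + 1)
    (hvdeg : v.degree ≤ ((g - 1 : ℕ) : WithBot ℕ))
    (heq : v ^ 2 + u * w = h)
    (hcop : gcd u (gcd v w) = 1)
    (Q : Polynomial ℂ) (hQ : Q = gcd P (gcd u v)) :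
    Q ^ 2 ∣ u :=
  stmt_6_general h h' P u v w hh' heq hcop Q hQ
end

section
/- Let Q be a monic polynomial with Q² = gcd(P²,u) and Q = gcd(P,u,v) (monic gcds), and write u = Q²·u_{Q²}, v = Q·v_Q, P = Q·P_Q. If x₀ ∈ ℂ satisfies u_{Q²}(x₀) = 0, Q(x₀) ≠ 0 and P_Q(x₀) ≠ 0, then (v_Q(x₀)/P_Q(x₀))² = h'(x₀); in other words, the point (x₀, v_Q(x₀)/P_Q(x₀)) lies on the smooth affine curve C' : z² = h'(x). -/
open Polynomial

theorem div_eval_sq_eq_eval_of_sq_add_mul_eq {K : Type*} [Field K] {Q u v w p h' : K[X]}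
    (heq : (Q * v) ^ 2 + Q ^ 2 * u * w = (Q * p) ^ 2 * h') {x : K} (hu : u.eval x = 0)
    (hQ : Q.eval x ≠ 0) (hp : p.eval x ≠ 0) :
    (v.eval x / p.eval x) ^ 2 = h'.eval x := by
  have hx := congrArg (eval x) heq
  simp only [eval_add, eval_mul, eval_pow, hu, mul_zero, zero_mul, add_zero] at hx
  have hcancel : v.eval x ^ 2 = p.eval x ^ 2 * h'.eval x := by
    apply mul_left_cancel₀ (pow_ne_zero 2 hQ)
    linear_combination hx
  field_simp
  linear_combination hcancel

theorem stmt_7_general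
    (h h' P u v w : Polynomial ℂ)
    (hh' : h = P ^ 2 * h')
    (heq : v ^ 2 + u * w = h)
    (Q uQ2 vQ PQ : Polynomial ℂ)
    (hu' : u = Q ^ 2 * uQ2) (hv' : v = Q * vQ) (hP' : P = Q * PQ)
    (x₀ : ℂ) (hx₀ : uQ2.eval x₀ = 0) (hQx₀ : Q.eval x₀ ≠ 0) (hPQx₀ : PQ.eval x₀ ≠ 0) :
    (vQ.eval x₀ / PQ.eval x₀) ^ 2 = h'.eval x₀ := by
  subst hu' hv' hP'
  exact div_eval_sq_eq_eval_of_sq_add_mul_eq (heq.trans hh') hx₀ hQx₀ hPQx₀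

/-- The zeros of `u_{Q²}` give points `(x₀, v_Q(x₀)/P_Q(x₀))` on the smooth curve
`C' : z² = h'(x)`. -/
theorem stmt_7
    (g : ℕ) (hg : 1 ≤ g) (h h' P u v w : Polynomial ℂ)
    (hhmon : h.Monic) (hhdeg : h.natDegree = 2 * g + 1)
    (hPmon : P.Monic) (hPdvd : P ^ 2 ∣ h)
    (hPmax : ∀ S : Polynomial ℂ, S.Monic → S ^ 2 ∣ h → S.natDegree ≤ P.natDegree)
    (hh' : h = P ^ 2 * h')
    (humon : u.Monic) (hudeg : u.natDegree = g)
    (hwmon : w.Monic) (hwdeg : w.natDegree = g + 1)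
    (hvdeg : v.degree ≤ ((g - 1 : ℕ) : WithBot ℕ))
    (heq : v ^ 2 + u * w = h)
    (hcop : gcd u (gcd v w) = 1)
    (Q uQ2 vQ PQ : Polynomial ℂ) (hQmon : Q.Monic)
    (hQgcd2 : Q ^ 2 = gcd (P ^ 2) u) (hQgcd : Q = gcd P (gcd u v))
    (hu' : u = Q ^ 2 * uQ2) (hv' : v = Q * vQ) (hP' : P = Q * PQ)
    (x₀ : ℂ) (hx₀ : uQ2.eval x₀ = 0) (hQx₀ : Q.eval x₀ ≠ 0) (hPQx₀ : PQ.eval x₀ ≠ 0) :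
    (vQ.eval x₀ / PQ.eval x₀) ^ 2 = h'.eval x₀ :=
  stmt_7_general h h' P u v w hh' heq Q uQ2 vQ PQ hu' hv' hP' x₀ hx₀ hQx₀ hPQx₀
end

section
/- Let A(X) = [[v, u],[w, −v]] be the 2×2 matrix over ℂ[X], let u_{g−1} denote the coefficient of X^{g−1} in u and w_g the coefficient of X^g in w, and set B(X) = [[0, 1],[X + w_g − u_{g−1}, 0]]. Then: (i) B(X) equals the matrix obtained from A(X) by taking entrywise the quotient of polynomial division by X^g (the polynomial part of A(X)/X^g) and subtracting u_{g−1} from the (2,1) entry; (ii) the (1,2) entry of the commutator [A(X), B(X)] = A(X)B(X) − B(X)A(X) equals 2v(X). In particular, the Mumford vector field D_{g−1} acts on the coordinate u by D_{g−1}(u) = 2v. -/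
open Polynomial Matrix

/-!
Dividing by `X ^ g` just shifts coefficients down by `g`, so the polynomial part of `A(X)/X^g`
is read off from the top coefficients: it is `0` for `±v` (degree `< g`), `1` for the monic `u`
of degree `g`, and `X + w_g` for the monic `w` of degree `g + 1`.
-/

namespace Polynomial

variable {R : Type*} [Ring R]

theorem coeff_divByMonic_X_pow (p : R[X]) (n k : ℕ) :
    (p /ₘ X ^ n).coeff k = p.coeff (n + k) := by
  nontriviality R
  have hmod : (p %ₘ X ^ n).coeff (n + k) = 0 := by
    refine coeff_eq_zero_of_degree_lt ((degree_modByMonic_lt p (monic_X_pow n)).trans_le ?_)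
    rw [degree_X_pow]
    exact_mod_cast Nat.le_add_right n k
  conv_rhs => rw [← modByMonic_add_div p (X ^ n)]
  rw [coeff_add, hmod, coeff_X_pow_mul', if_pos (Nat.le_add_right n k), Nat.add_sub_cancel_left,
    zero_add]

theorem divByMonic_X_pow_eq_zero {p : R[X]} {n : ℕ} (hp : p.degree < n) : p /ₘ X ^ n = 0 := by
  ext k
  rw [coeff_divByMonic_X_pow, coeff_zero]
  exact coeff_eq_zero_of_degree_lt (hp.trans_le (by exact_mod_cast Nat.le_add_right n k))

theorem Monic.divByMonic_X_pow_natDegree {p : R[X]} (hp : p.Monic) :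
    p /ₘ X ^ p.natDegree = 1 := by
  ext k
  rw [coeff_divByMonic_X_pow, coeff_one]
  rcases k with _ | k
  · simpa using hp.coeff_natDegree
  · exact coeff_eq_zero_of_natDegree_lt (by omega)

theorem Monic.divByMonic_X_pow_of_natDegree_eq_succ {p : R[X]} {n : ℕ} (hp : p.Monic)
    (hdeg : p.natDegree = n + 1) : p /ₘ X ^ n = X + C (p.coeff n) := by
  ext k
  rw [coeff_divByMonic_X_pow, coeff_add, coeff_X, coeff_C]
  rcases k with _ | _ | k
  · simp
  · simpa [← hdeg] using hp.coeff_natDegree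
  · simpa using coeff_eq_zero_of_natDegree_lt (by omega)

end Polynomial

theorem commutator_laxMatrix_apply_zero_one {R : Type*} [CommRing R] (u v w b : R) :
    (!![v, u; w, -v] * !![0, 1; b, 0] - !![0, 1; b, 0] * !![v, u; w, -v]) 0 1 = 2 * v := by
  simp [two_mul]

/-- For `A(X) = [[v,u],[w,-v]]` in the Mumford phase space `M_g`, the matrix
`B(X) = [[0,1],[X + w_g - u_{g-1}, 0]]` is the polynomial part of `A(X)/X^g`
minus `u_{g-1}` in the `(2,1)` entry, and the `(1,2)` entry of the commutator
`[A(X), B(X)]` is `2 v(X)`; i.e. the Mumford vector field `D_{g-1}` satisfies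
`D_{g-1}(u) = 2v`. -/
theorem stmt_8
    (g : ℕ) (hg : 1 ≤ g) (u v w : Polynomial ℂ)
    (humon : u.Monic) (hudeg : u.natDegree = g)
    (hwmon : w.Monic) (hwdeg : w.natDegree = g + 1)
    (hvdeg : v.degree ≤ ((g - 1 : ℕ) : WithBot ℕ)) :
    (!![(0 : Polynomial ℂ), 1; X + C (w.coeff g - u.coeff (g - 1)), 0]
        = Matrix.of (fun i j =>
            (!![v, u; w, -v] : Matrix (Fin 2) (Fin 2) (Polynomial ℂ)) i j /ₘ X ^ g)
          - C (u.coeff (g - 1)) • !![0, 0; 1, 0]) ∧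
    ((!![v, u; w, -v] * !![(0 : Polynomial ℂ), 1; X + C (w.coeff g - u.coeff (g - 1)), 0]
        - !![(0 : Polynomial ℂ), 1; X + C (w.coeff g - u.coeff (g - 1)), 0] * !![v, u; w, -v])
        0 1 = 2 * v) := by
  have hvlt : v.degree < g := hvdeg.trans_lt (by exact_mod_cast Nat.sub_lt hg one_pos)
  have hv : v /ₘ X ^ g = 0 := divByMonic_X_pow_eq_zero hvlt
  have hnegv : (-v) /ₘ X ^ g = 0 := divByMonic_X_pow_eq_zero (by rwa [degree_neg])
  have hu : u /ₘ X ^ g = 1 := hudeg ▸ humon.divByMonic_X_pow_natDegree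
  have hw : w /ₘ X ^ g = X + C (w.coeff g) := hwmon.divByMonic_X_pow_of_natDegree_eq_succ hwdeg
  refine ⟨?_, commutator_laxMatrix_apply_zero_one _ _ _ _⟩
  ext i j : 1
  fin_cases i <;> fin_cases j <;> simp [hv, hnegv, hu, hw, C_sub, add_sub_assoc]
end
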